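/- Every chores-only lexicographic instance admits a complete allocation that is simultaneously EFX and Pareto optimal. -/

import Mathlib

attribute [local instance 10] Classical.propDecidable

/-- A lexicographic mixed instance: each agent `i` has a set `G i` of goods
(its complement being the chores `C i`) and a strict linear importance order
`⊳_i` on the items, encoded as a linear order where larger means more important. -/
structure LexInstance (N M : Type) [Fintype N] [Fintype M] [DecidableEq M] where
  G : N → Finset M
  ord : N → LinearOrder M

theorem Finset.mem_toList_erase_univ {α : Type*} [Fintype α] [DecidableEq α] {a b : α} :
    b ∈ (Finset.univ.erase a).toList ↔ b ≠ a := by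
  simp

theorem Finset.length_toList_erase_univ {α : Type*} [Fintype α] [DecidableEq α] (a : α) :
    (Finset.univ.erase a).toList.length = Fintype.card α - 1 := by
  simp [Finset.card_erase_of_mem]

namespace LexInstance

variable {N M : Type} [Fintype N] [Fintype M] [DecidableEq M]

/-- `inst.imp i a b` means `a ⊳_i b` : `a` is more important than `b` for agent `i`. -/
def imp (inst : LexInstance N M) (i : N) (a b : M) : Prop := (inst.ord i).lt b a

/-- The chores of agent `i`. -/
def C (inst : LexInstance N M) (i : N) : Finset M := (inst.G i)ᶜ

/-- Strict lexicographic preference `X ≻_i Y`. -/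
def SPref (inst : LexInstance N M) (i : N) (X Y : Finset M) : Prop :=
  (∃ g ∈ inst.G i ∩ (X \ Y), ∀ o ∈ Y ∩ inst.G i, inst.imp i o g → o ∈ X) ∨
  (∃ c ∈ inst.C i ∩ (Y \ X), ∀ o ∈ X ∩ inst.C i, inst.imp i o c → o ∈ Y)

/-- Weak lexicographic preference `X ⪰_i Y`. -/
def WPref (inst : LexInstance N M) (i : N) (X Y : Finset M) : Prop :=
  inst.SPref i X Y ∨ X = Y

/-- A (complete) allocation: pairwise disjoint bundles whose union is all of `M`. -/
def IsAllocation (_inst : LexInstance N M) (A : N → Finset M) : Prop :=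
  (∀ i j, i ≠ j → Disjoint (A i) (A j)) ∧ ∀ o : M, ∃ i, o ∈ A i

/-- Pareto optimality of a (complete) allocation. -/
def ParetoOptimal (inst : LexInstance N M) (A : N → Finset M) : Prop :=
  ¬ ∃ B : N → Finset M, inst.IsAllocation B ∧
      (∀ i, inst.WPref i (B i) (A i)) ∧ ∃ h, inst.SPref h (B h) (A h)

/-- The item agent `i` picks from the remaining set `R`: its `⊳_i`-greatest
remaining good if there is one, and otherwise the `⊳_i`-least remaining item. -/
noncomputable def pickOne (inst : LexInstance N M) (i : N) (R : Finset M)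
    (h : R.Nonempty) : M :=
  if hg : (R ∩ inst.G i).Nonempty then @Finset.max' M (inst.ord i) (R ∩ inst.G i) hg
  else @Finset.min' M (inst.ord i) R h

/-- Run the picking procedure along a sequence of agents, starting from the
remaining items `R`; returns the resulting bundles. -/
noncomputable def runPick (inst : LexInstance N M) : List N → Finset M → N → Finset M
  | [], _ => fun _ => ∅
  | i :: rest, R =>
    if h : R.Nonempty then
      fun j =>
        runPick inst rest (R.erase (inst.pickOne i R h)) j ∪
          (if j = i then {inst.pickOne i R h} else ∅)
    else fun _ => ∅

/-- An allocation is sequencible if it is produced by some picking sequence of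
length `|M|` starting from all items. -/
def Sequencible (inst : LexInstance N M) (A : N → Finset M) : Prop :=
  ∃ s : List N, s.length = Fintype.card M ∧ inst.runPick s Finset.univ = A

/-- A chores-only instance: every item is a chore for every agent. -/
def ChoresOnly (inst : LexInstance N M) : Prop := ∀ i, inst.G i = ∅

/-- Envy-freeness up to any item. -/
def EFX (inst : LexInstance N M) (A : N → Finset M) : Prop :=
  ∀ i h : N,
    (∀ o ∈ A h ∩ inst.G i, inst.WPref i (A i) ((A h).erase o)) ∧
    (∀ o ∈ A i ∩ inst.C i, inst.WPref i ((A i).erase o) (A h))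

/-- Envy-freeness up to any chore. -/
def EFXc (inst : LexInstance N M) (A : N → Finset M) : Prop :=
  ∀ i h : N, ∀ o ∈ A i ∩ inst.C i, inst.WPref i ((A i).erase o) (A h)

/-- Envy-freeness up to one item. -/
def EF1 (inst : LexInstance N M) (A : N → Finset M) : Prop :=
  ∀ i h : N, ((A i ∩ inst.C i) ∪ (A h ∩ inst.G i)).Nonempty →
    ∃ o ∈ (A i ∩ inst.C i) ∪ (A h ∩ inst.G i),
      inst.WPref i (A i) ((A h).erase o) ∨ inst.WPref i ((A i).erase o) (A h)

/-- `A` gives every agent at least its maximin share: for every partition `P`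
of the items into `n` bundles, agent `i` weakly prefers `A i` to some bundle of
`P` (hence to the `⪰_i`-least bundle of `P`). -/
def MMSfair (inst : LexInstance N M) (A : N → Finset M) : Prop :=
  ∀ i, ∀ P : N → Finset M, inst.IsAllocation P → ∃ j, inst.WPref i (A i) (P j)

/-- `B` is the maximin share `MMS_i` of agent `i`: `B` is the `⪰_i`-least bundle
of some partition of `M` into `n` bundles, and every such partition contains a
bundle to which `B` is weakly preferred. -/
def IsMMSBundle (inst : LexInstance N M) (i : N) (B : Finset M) : Prop :=
  (∃ P : N → Finset M, inst.IsAllocation P ∧ (∃ j, P j = B) ∧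
      ∀ j, inst.WPref i (P j) B) ∧
  (∀ P : N → Finset M, inst.IsAllocation P → ∃ j, inst.WPref i B (P j))

/-- The `k`-th (0-indexed) `⊳_i`-greatest good of agent `i`, if any. -/
noncomputable def kthGood (inst : LexInstance N M) (i : N) (k : ℕ) : Option M :=
  letI : LinearOrder M := inst.ord i
  (((inst.G i).sort (· ≤ ·)).reverse)[k]?

/-- The `k`-th (0-indexed) `⊳_i`-least chore of agent `i`, if any. -/
noncomputable def kthChore (inst : LexInstance N M) (i : N) (k : ℕ) : Option M :=
  letI : LinearOrder M := inst.ord i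
  ((inst.C i).sort  (· ≤ ·))[k]?

/-- Number of agents receiving their `k`-th (0-indexed) greatest good. -/
noncomputable def nPlus (inst : LexInstance N M) (A : N → Finset M) (k : ℕ) : ℕ :=
  (Finset.univ.filter fun i => (inst.kthGood i k).elim False (· ∈ A i)).card

/-- Number of agents receiving their `k`-th (0-indexed) least chore. -/
noncomputable def nMinus (inst : LexInstance N M) (A : N → Finset M) (k : ℕ) : ℕ :=
  (Finset.univ.filter fun i => (inst.kthChore i k).elim False (· ∈ A i)).card

/-- The rank signature `(n_1^+, …, n_m^+, n_1^-, …, n_m^-)` of an allocation. -/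
noncomputable def signature (inst : LexInstance N M) (A : N → Finset M) : List ℕ :=
  ((List.range (Fintype.card M)).map fun k => inst.nPlus A k) ++
    ((List.range (Fintype.card M)).map fun k => inst.nMinus A k)

/-- Rank-maximality: the signature is lexicographically maximal over allocations. -/
def RankMaximal (inst : LexInstance N M) (A : N → Finset M) : Prop :=
  inst.IsAllocation A ∧ ∀ B : N → Finset M, inst.IsAllocation B →
    ¬ List.Lex (· < ·) (inst.signature A) (inst.signature B)

end LexInstance

/-- The set of the `k` greatest (most important) elements of `S` under `L`. -/
def topK {M : Type} [DecidableEq M] (L : LinearOrder M) (S : Finset M) (k : ℕ) :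
    Finset M :=
  letI := L
  S.filter fun o => (S.filter fun o' => o < o').card < k

/-- Build a linear order on `Fin m` from an injective ranking function
(larger value = more important). -/
def mkOrd {m : ℕ} (f : Fin m → ℕ) (hf : Function.Injective f) : LinearOrder (Fin m) :=
  LinearOrder.lift' f hf

/-!
Fix an agent `i₀` and let `T` be its `n - 1` most important chores. The other agents take turns
picking their least important remaining chore of `T` (serial dictatorship), and `i₀` gets all
the other chores. Every other agent ends up with at most one chore, so removing it leaves nothing
to envy; and if `i₀` has any chore at all, each other agent holds a chore of `T`, which `i₀`
finds more important than its whole bundle. For Pareto optimality, a weak improvement for `i₀`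
contains no chore of `T`, so `T` is redistributed among the others; under lexicographic
preferences an agent who picked its least important remaining chore is worse off with any other
bundle of those chores, so by induction along the picking order everybody keeps its bundle.
-/

theorem Finset.exists_card_eq_forall_lt {α : Type*} [LinearOrder α] [Fintype α] :
    ∀ {k : ℕ}, k ≤ Fintype.card α → ∃ T : Finset α, T.card = k ∧ ∀ t ∈ T, ∀ s ∉ T, s < t
  | 0, _ => ⟨∅, by simp⟩
  | k + 1, hk => by
    obtain ⟨T, hT, hlt⟩ := Finset.exists_card_eq_forall_lt (α := α) (k := k) (by omega)
    have hne : Tᶜ.Nonempty := by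
      rw [← Finset.card_pos, Finset.card_compl]
      omega
    have hx : Tᶜ.max' hne ∉ T := Finset.mem_compl.1 (Finset.max'_mem _ hne)
    refine ⟨insert (Tᶜ.max' hne) T, by rw [Finset.card_insert_of_notMem hx, hT], ?_⟩
    intro t ht s hs
    rw [Finset.mem_insert, not_or] at hs
    rcases Finset.mem_insert.1 ht with rfl | ht
    · exact lt_of_le_of_ne (Finset.le_max' _ s (Finset.mem_compl.2 hs.2)) hs.1
    · exact hlt t ht s hs.2

namespace LexInstance

variable {N M : Type} [Fintype N] [Fintype M] [DecidableEq M] {inst : LexInstance N M}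

theorem imp_irrefl (i : N) (a : M) : ¬ inst.imp i a a :=
  @lt_irrefl M (inst.ord i).toPreorder a

theorem imp_asymm {i : N} {a b : M} (h : inst.imp i a b) : ¬ inst.imp i b a :=
  @lt_asymm M (inst.ord i).toPreorder _ _ h

theorem not_spref_self {i : N} {X : Finset M} : ¬ inst.SPref i X X := by
  rintro (⟨_, hg, -⟩ | ⟨_, hc, -⟩) <;> simp_all

theorem paretoOptimal_of_forall_eq {A : N → Finset M}
    (h : ∀ B, inst.IsAllocation B → (∀ i, inst.WPref i (B i) (A i)) → B = A) :
    inst.ParetoOptimal A := by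
  rintro ⟨B, hB, hBA, j, hj⟩
  rw [h B hB hBA] at hj
  exact not_spref_self hj

theorem spref_iff_of_choresOnly (hch : inst.ChoresOnly) {i : N} {X Y : Finset M} :
    inst.SPref i X Y ↔ ∃ c ∈ Y, c ∉ X ∧ ∀ o ∈ X, inst.imp i o c → o ∈ Y := by
  simp [SPref, C, hch i, and_assoc]

theorem spref_erase (hch : inst.ChoresOnly) {i : N} {X : Finset M} {o : M} (ho : o ∈ X) :
    inst.SPref i (X.erase o) X :=
  (spref_iff_of_choresOnly hch).2
    ⟨o, ho, Finset.notMem_erase o X, fun _ h _ => Finset.mem_of_mem_erase h⟩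

theorem spref_of_imp (hch : inst.ChoresOnly) {i : N} {X Y : Finset M} {c : M} (hc : c ∈ Y)
    (hX : ∀ o ∈ X, inst.imp i c o) : inst.SPref i X Y :=
  (spref_iff_of_choresOnly hch).2 ⟨c, hc, fun h => imp_irrefl i c (hX c h),
    fun o ho h => absurd (hX o ho) (imp_asymm h)⟩

theorem wpref_empty_left (hch : inst.ChoresOnly) (i : N) (Y : Finset M) :
    inst.WPref i ∅ Y := by
  rcases Y.eq_empty_or_nonempty with rfl | ⟨c, hc⟩
  · exact Or.inr rfl
  · exact Or.inl (spref_of_imp hch hc (by simp))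

theorem eq_of_wpref_of_subset (hch : inst.ChoresOnly) {i : N} {Y Z : Finset M}
    (h : inst.WPref i Z Y) (hYZ : Y ⊆ Z) : Z = Y := by
  refine h.resolve_left fun hs => ?_
  obtain ⟨c, hc, hcZ, -⟩ := (spref_iff_of_choresOnly hch).1 hs
  exact hcZ (hYZ hc)

theorem disjoint_of_wpref (hch : inst.ChoresOnly) {i : N} {Y Z S : Finset M}
    (h : inst.WPref i Z Y) (hS : ∀ t ∈ S, ∀ y ∈ Y, inst.imp i t y) : Disjoint Z S := by
  refine Finset.disjoint_left.2 fun t htZ htS => ?_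
  have htY : t ∈ Y := by
    rcases h with hs | rfl
    · obtain ⟨c, hc, -, hZ⟩ := (spref_iff_of_choresOnly hch).1 hs
      exact hZ t htZ (hS t htS c hc)
    · exact htZ
  exact imp_irrefl i t (hS t htS t htY)

theorem pickOne_mem {i : N} {R : Finset M} (hR : R.Nonempty) : inst.pickOne i R hR ∈ R := by
  unfold pickOne
  split_ifs with hg
  · exact Finset.mem_of_mem_inter_left (@Finset.max'_mem M (inst.ord i) _ hg)
  · exact @Finset.min'_mem M (inst.ord i) _ hR

theorem pickOne_eq_min' (hch : inst.ChoresOnly) {i : N} {R : Finset M} (hR : R.Nonempty) :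
    inst.pickOne i R hR = @Finset.min' M (inst.ord i) R hR := by
  simp [pickOne, hch i]

theorem runPick_cons {i : N} {l : List N} {R : Finset M} (hR : R.Nonempty) (j : N) :
    inst.runPick (i :: l) R j =
      inst.runPick l (R.erase (inst.pickOne i R hR)) j ∪
        if j = i then {inst.pickOne i R hR} else ∅ := by
  simp [runPick, hR]

theorem runPick_empty : ∀ (l : List N) (j : N), inst.runPick l ∅ j = ∅
  | [], _ => rfl
  | _ :: _, _ => by simp [runPick]

theorem runPick_subset : ∀ (l : List N) (R : Finset M) (j : N), inst.runPick l R j ⊆ R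
  | [], _, _ => Finset.empty_subset _
  | i :: l, R, j => by
    rcases R.eq_empty_or_nonempty with rfl | hR
    · rw [runPick_empty]
    rw [runPick_cons hR]
    refine Finset.union_subset ((runPick_subset l _ j).trans (Finset.erase_subset _ _)) ?_
    split_ifs
    · exact Finset.singleton_subset_iff.2 (pickOne_mem hR)
    · exact Finset.empty_subset _

theorem runPick_of_notMem : ∀ {l : List N} (R : Finset M) {j : N}, j ∉ l →
    inst.runPick l R j = ∅
  | [], _, _, _ => rfl
  | i :: l, R, j, hj => by
    rcases R.eq_empty_or_nonempty with rfl | hR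
    · rw [runPick_empty]
    rw [List.mem_cons, not_or] at hj
    rw [runPick_cons hR, runPick_of_notMem _ hj.2, if_neg hj.1, Finset.union_empty]

theorem card_runPick_le_one : ∀ {l : List N}, l.Nodup → ∀ (R : Finset M) (j : N),
    (inst.runPick l R j).card ≤ 1
  | [], _, _, _ => by simp [runPick]
  | i :: l, hl, R, j => by
    rcases R.eq_empty_or_nonempty with rfl | hR
    · simp [runPick_empty]
    rw [List.nodup_cons] at hl
    rw [runPick_cons hR]
    by_cases hj : j = i
    · subst hj
      simp [runPick_of_notMem _ hl.1]
    · simpa [hj] using card_runPick_le_one hl.2 _ j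

theorem mem_runPick_cons {i : N} {l : List N} {R : Finset M} (hR : R.Nonempty) {j : N}
    {o : M} : o ∈ inst.runPick (i :: l) R j ↔
      o ∈ inst.runPick l (R.erase (inst.pickOne i R hR)) j ∨ (j = i ∧ o = inst.pickOne i R hR) := by
  rw [runPick_cons hR]
  split_ifs <;> simp [*, or_comm]

theorem eq_of_mem_runPick_of_mem_runPick : ∀ {l : List N} {R : Finset M} {j j' : N} {o : M},
    o ∈ inst.runPick l R j → o ∈ inst.runPick l R j' → j = j'
  | [], _, _, _, _, h, _ => absurd h (Finset.notMem_empty _)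
  | i :: l, R, j, j', o, h, h' => by
    rcases R.eq_empty_or_nonempty with rfl | hR
    · simp [runPick_empty] at h
    have hfresh {k : N} (hk : o ∈ inst.runPick l (R.erase (inst.pickOne i R hR)) k) :
        o ≠ inst.pickOne i R hR := Finset.ne_of_mem_erase (runPick_subset l _ k hk)
    rw [mem_runPick_cons hR] at h h'
    rcases h with h | ⟨rfl, rfl⟩ <;> rcases h' with h' | ⟨rfl, ho⟩
    · exact eq_of_mem_runPick_of_mem_runPick h h'
    · exact absurd ho (hfresh h)
    · exact absurd rfl (hfresh h')
    · rfl

theorem exists_mem_runPick : ∀ {l : List N} {R : Finset M}, R.card ≤ l.length →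
    ∀ o ∈ R, ∃ j ∈ l, o ∈ inst.runPick l R j
  | [], R, hR, o, ho => by simp_all
  | i :: l, R, hRl, o, ho => by
    have hR : R.Nonempty := ⟨o, ho⟩
    by_cases hoi : o = inst.pickOne i R hR
    · exact ⟨i, List.mem_cons_self, (mem_runPick_cons hR).2 (Or.inr ⟨rfl, hoi⟩)⟩
    have hcard : (R.erase (inst.pickOne i R hR)).card ≤ l.length := by
      rw [Finset.card_erase_of_mem (pickOne_mem hR)]
      simp only [List.length_cons] at hRl
      omega
    obtain ⟨j, hj, hoj⟩ := exists_mem_runPick hcard o (Finset.mem_erase.2 ⟨hoi, ho⟩)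
    exact ⟨j, List.mem_cons_of_mem i hj, (mem_runPick_cons hR).2 (Or.inl hoj)⟩

theorem runPick_nonempty : ∀ {l : List N} {R : Finset M}, l.length ≤ R.card →
    ∀ j ∈ l, (inst.runPick l R j).Nonempty
  | [], _, _, _, hj => absurd hj List.not_mem_nil
  | i :: l, R, hlR, j, hj => by
    have hR : R.Nonempty := by
      rw [← Finset.card_pos]
      simp only [List.length_cons] at hlR
      omega
    rcases List.mem_cons.1 hj with rfl | hj
    · exact ⟨_, (mem_runPick_cons hR).2 (Or.inr ⟨rfl, rfl⟩)⟩
    have hcard : l.length ≤ (R.erase (inst.pickOne i R hR)).card := by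
      rw [Finset.card_erase_of_mem (pickOne_mem hR)]
      simp only [List.length_cons] at hlR
      omega
    obtain ⟨o, ho⟩ := runPick_nonempty hcard j hj
    exact ⟨o, (mem_runPick_cons hR).2 (Or.inl ho)⟩

theorem imp_pickOne (hch : inst.ChoresOnly) {i : N} {R : Finset M} (hR : R.Nonempty) {t : M}
    (ht : t ∈ R.erase (inst.pickOne i R hR)) : inst.imp i t (inst.pickOne i R hR) := by
  let _ := inst.ord i
  obtain ⟨hne, htR⟩ := Finset.mem_erase.1 ht
  rw [pickOne_eq_min' hch] at hne ⊢
  exact lt_of_le_of_ne (Finset.min'_le R t htR) (Ne.symm hne)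

theorem eq_runPick_of_wpref (hch : inst.ChoresOnly) {B : N → Finset M} :
    ∀ {l : List N} {R : Finset M}, l.Nodup →
      (∀ j ∈ l, inst.WPref j (B j) (inst.runPick l R j)) →
      (∀ o ∈ R, ∃ j ∈ l, o ∈ B j) → ∀ j ∈ l, B j = inst.runPick l R j
  | [], _, _, _, _, _, hj => absurd hj List.not_mem_nil
  | i :: l, R, hl, hB, hcover, j, hj => by
    rcases R.eq_empty_or_nonempty with rfl | hR
    · exact eq_of_wpref_of_subset hch (hB j hj) (by simp [runPick_empty])
    rw [List.nodup_cons] at hl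
    set c := inst.pickOne i R hR
    have hi : inst.runPick (i :: l) R i = {c} := by
      rw [runPick_cons hR, runPick_of_notMem _ hl.1, if_pos rfl, Finset.empty_union]
    have hrest (k : N) (hk : k ∈ l) :
        inst.runPick (i :: l) R k = inst.runPick l (R.erase c) k := by
      rw [runPick_cons hR, if_neg (ne_of_mem_of_not_mem hk hl.1), Finset.union_empty]
    have hBi : inst.WPref i (B i) {c} := hi ▸ hB i List.mem_cons_self
    have hBi_disj : Disjoint (B i) (R.erase c) := disjoint_of_wpref hch hBi fun t ht y hy => by
      rw [Finset.mem_singleton.1 hy]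
      exact imp_pickOne hch hR ht
    have ih : ∀ k ∈ l, B k = inst.runPick l (R.erase c) k := by
      refine eq_runPick_of_wpref hch hl.2
        (fun k hk => hrest k hk ▸ hB k (List.mem_cons_of_mem i hk)) fun o ho => ?_
      obtain ⟨k, hk, hok⟩ := hcover o (Finset.mem_of_mem_erase ho)
      rcases List.mem_cons.1 hk with rfl | hk
      · exact absurd ho (Finset.disjoint_left.1 hBi_disj hok)
      · exact ⟨k, hk, hok⟩
    have hcB : c ∈ B i := by
      obtain ⟨k, hk, hck⟩ := hcover c (pickOne_mem hR)
      rcases List.mem_cons.1 hk with rfl | hk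
      · exact hck
      · rw [ih k hk] at hck
        exact absurd (runPick_subset l _ k hck) (Finset.notMem_erase c R)
    rcases List.mem_cons.1 hj with rfl | hj
    · rw [hi]
      exact eq_of_wpref_of_subset hch hBi (Finset.singleton_subset_iff.2 hcB)
    · rw [hrest j hj]
      exact ih j hj

section Construction

noncomputable def choresAlloc (inst : LexInstance N M) (i₀ : N) (T : Finset M) : N → Finset M :=
  Function.update (inst.runPick (Finset.univ.erase i₀).toList T) i₀ Tᶜ

variable {i₀ : N} {T : Finset M}

theorem choresAlloc_self : inst.choresAlloc i₀ T i₀ = Tᶜ := by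
  simp [choresAlloc]

theorem choresAlloc_of_ne {j : N} (hj : j ≠ i₀) :
    inst.choresAlloc i₀ T j = inst.runPick (Finset.univ.erase i₀).toList T j := by
  simp [choresAlloc, hj]

theorem choresAlloc_subset {j : N} (hj : j ≠ i₀) : inst.choresAlloc i₀ T j ⊆ T :=
  (choresAlloc_of_ne hj).trans_subset (runPick_subset _ T j)

theorem isAllocation_choresAlloc (hT : T.card ≤ Fintype.card N - 1) :
    inst.IsAllocation (inst.choresAlloc i₀ T) := by
  refine ⟨fun j j' hjj' => Finset.disjoint_left.2 fun o ho ho' => ?_, fun o => ?_⟩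
  · rcases eq_or_ne j i₀ with rfl | hj
    · rw [choresAlloc_self, Finset.mem_compl] at ho
      exact ho (choresAlloc_subset hjj'.symm ho')
    rcases eq_or_ne j' i₀ with rfl | hj'
    · rw [choresAlloc_self, Finset.mem_compl] at ho'
      exact ho' (choresAlloc_subset hj ho)
    rw [choresAlloc_of_ne hj] at ho
    rw [choresAlloc_of_ne hj'] at ho'
    exact hjj' (eq_of_mem_runPick_of_mem_runPick ho ho')
  · by_cases hoT : o ∈ T
    · obtain ⟨j, hj, hoj⟩ := exists_mem_runPick (inst := inst)
        (l := (Finset.univ.erase i₀).toList) (by rwa [Finset.length_toList_erase_univ]) o hoT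
      have hj : j ≠ i₀ := Finset.mem_toList_erase_univ.1 hj
      exact ⟨j, by rwa [choresAlloc_of_ne hj]⟩
    · exact ⟨i₀, by rwa [choresAlloc_self, Finset.mem_compl]⟩

theorem efx_choresAlloc (hch : inst.ChoresOnly) (hdom : ∀ t ∈ T, ∀ s ∉ T, inst.imp i₀ t s)
    (hT : T.card = min (Fintype.card N - 1) (Fintype.card M)) :
    inst.EFX (inst.choresAlloc i₀ T) := by
  refine fun i h => ⟨by simp [hch i], fun o ho => ?_⟩
  have ho : o ∈ inst.choresAlloc i₀ T i := Finset.mem_of_mem_inter_left ho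
  rcases eq_or_ne i i₀ with rfl | hi
  · rcases eq_or_ne h i with rfl | hh
    · exact Or.inl (spref_erase hch ho)
    rw [choresAlloc_self] at ho ⊢
    have hcard : (Finset.univ.erase i).toList.length ≤ T.card := by
      have : T.card < Fintype.card M :=
        Finset.card_lt_univ_of_notMem (Finset.mem_compl.1 ho)
      rw [Finset.length_toList_erase_univ]
      omega
    obtain ⟨x, hx⟩ := runPick_nonempty (inst := inst) hcard h (Finset.mem_toList_erase_univ.2 hh)
    rw [← choresAlloc_of_ne hh] at hx
    exact Or.inl (spref_of_imp hch hx fun s hs =>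
      hdom x (choresAlloc_subset hh hx) s (Finset.mem_compl.1 (Finset.mem_of_mem_erase hs)))
  · have hle : (inst.choresAlloc i₀ T i).card ≤ 1 := by
      rw [choresAlloc_of_ne hi]
      exact card_runPick_le_one (Finset.nodup_toList _) T i
    have hempty : ((inst.choresAlloc i₀ T i).erase o).card = 0 := by
      rw [Finset.card_erase_of_mem ho]
      omega
    rw [Finset.card_eq_zero.1 hempty]
    exact wpref_empty_left hch i _

theorem paretoOptimal_choresAlloc (hch : inst.ChoresOnly)
    (hdom : ∀ t ∈ T, ∀ s ∉ T, inst.imp i₀ t s) :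
    inst.ParetoOptimal (inst.choresAlloc i₀ T) := by
  refine paretoOptimal_of_forall_eq fun B hB hBA => ?_
  have hi₀ : Disjoint (B i₀) T := by
    refine disjoint_of_wpref hch (hBA i₀) fun t ht y hy => hdom t ht y ?_
    rwa [choresAlloc_self, Finset.mem_compl] at hy
  have hothers : ∀ j ∈ (Finset.univ.erase i₀).toList,
      B j = inst.runPick (Finset.univ.erase i₀).toList T j := by
    refine eq_runPick_of_wpref hch (Finset.nodup_toList _)
      (fun j hj => by simpa [choresAlloc_of_ne (Finset.mem_toList_erase_univ.1 hj)] using hBA j)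
      fun o ho => ?_
    obtain ⟨j, hoj⟩ := hB.2 o
    have hj : j ≠ i₀ := by
      rintro rfl
      exact Finset.disjoint_left.1 hi₀ hoj ho
    exact ⟨j, Finset.mem_toList_erase_univ.2 hj, hoj⟩
  have hB_of_ne {j : N} (hj : j ≠ i₀) : B j = inst.choresAlloc i₀ T j := by
    rw [choresAlloc_of_ne hj]
    exact hothers j (Finset.mem_toList_erase_univ.2 hj)
  funext j
  rcases eq_or_ne j i₀ with rfl | hj
  · refine eq_of_wpref_of_subset hch (hBA j) fun o ho => ?_
    obtain ⟨k, hok⟩ := hB.2 o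
    rcases eq_or_ne k j with rfl | hk
    · exact hok
    rw [choresAlloc_self, Finset.mem_compl] at ho
    exact absurd (choresAlloc_subset hk (hB_of_ne hk ▸ hok)) ho
  · exact hB_of_ne hj

end Construction

end LexInstance

/-- every chores-only lexicographic instance admits a complete
allocation that is simultaneously EFX and Pareto optimal. -/
theorem efx_po_exists_chores
    {N M : Type} [Fintype N] [Fintype M] [DecidableEq M] [Nonempty N]
    (inst : LexInstance N M) (hch : inst.ChoresOnly) :
    ∃ A : N → Finset M, inst.IsAllocation A ∧ inst.EFX A ∧ inst.ParetoOptimal A := by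
  obtain ⟨i₀⟩ := ‹Nonempty N›
  obtain ⟨T, hT, hdom⟩ := @Finset.exists_card_eq_forall_lt M (inst.ord i₀) _ _
    (min_le_right (Fintype.card N - 1) (Fintype.card M))
  exact ⟨inst.choresAlloc i₀ T, LexInstance.isAllocation_choresAlloc (hT ▸ min_le_left _ _),
    LexInstance.efx_choresAlloc hch hdom hT, LexInstance.paretoOptimal_choresAlloc hch hdom⟩
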